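/- Let M be a maximal subalgebra of a finite-dimensional solvable Lie algebra L. Then the core of N_i(M) in L is contained in N_i(L) for every i ≥ 0, where the core U_L of a subalgebra U is the largest ideal of L contained in U. -/

import Mathlib

/-- The canonical quotient map `L → L ⧸ I` as a morphism of Lie algebras. -/
def lieQuotMk {F L : Type*} [Field F] [LieRing L] [LieAlgebra F L] (I : LieIdeal F L) :
    L →ₗ⁅F⁆ L ⧸ I where
  toLinearMap := (LieSubmodule.Quotient.mk' I).toLinearMap
  map_lie' := rfl

variable (F : Type*) [Field F]

/-- The nilradical: the largest nilpotent ideal of a (finite-dimensional) Lie algebra. -/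
noncomputable def nilrad (L : Type*) [LieRing L] [LieAlgebra F L] : LieIdeal F L :=
  sSup {I : LieIdeal F L | LieModule.IsNilpotent I I}

/-- The upper nilpotent series: `N 0 = 0`, `N (i+1) / N i = nilradical of L ⧸ N i`. -/
noncomputable def upperNil (L : Type*) [LieRing L] [LieAlgebra F L] : ℕ → LieIdeal F L
  | 0 => ⊥
  | n + 1 => LieIdeal.comap (lieQuotMk (upperNil L n)) (nilrad F (L ⧸ upperNil L n))

/-- The nilpotent length: the least `n` with `N n = L`. -/
noncomputable def nilLen (L : Type*) [LieRing L] [LieAlgebra F L] : ℕ :=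
  sInf {n : ℕ | upperNil F L n = ⊤}

/-- The nilpotent residual `γ∞(L)`: the smallest ideal with nilpotent quotient. -/
noncomputable def nilResidual (L : Type*) [LieRing L] [LieAlgebra F L] : LieIdeal F L :=
  sInf {I : LieIdeal F L | LieModule.IsNilpotent (L ⧸ I) (L ⧸ I)}

/-- The lower nilpotent series: `Γ 0 = L`, `Γ (i+1) = γ∞(Γ i)`, viewed as subalgebras of `L`. -/
noncomputable def lowerNil (L : Type*) [LieRing L] [LieAlgebra F L] : ℕ → LieSubalgebra F L
  | 0 => ⊤
  | n + 1 =>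
      LieSubalgebra.map (lowerNil L n).incl
        (LieIdeal.toLieSubalgebra F (lowerNil L n) (nilResidual F (lowerNil L n)))

/-- `M` is a maximal (proper) subalgebra of `L`. -/
def IsMaxSub {L : Type*} [LieRing L] [LieAlgebra F L] (M : LieSubalgebra F L) : Prop :=
  M ≠ ⊤ ∧ ∀ K : LieSubalgebra F L, M < K → K = ⊤

/-- The Frattini subalgebra: the intersection of all maximal subalgebras. -/
noncomputable def lieFrattini (L : Type*) [LieRing L] [LieAlgebra F L] : LieSubalgebra F L :=
  sInf {M : LieSubalgebra F L | IsMaxSub F M}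

/-- The core of a subalgebra `U`: the largest ideal of `L` contained in `U`. -/
noncomputable def lieCore {L : Type*} [LieRing L] [LieAlgebra F L] (U : LieSubalgebra F L) :
    LieIdeal F L :=
  sSup {I : LieIdeal F L | (I : Set L) ⊆ (U : Set L)}

/-- `A` is a minimal ideal of `L`. -/
def IsMinIdeal {L : Type*} [LieRing L] [LieAlgebra F L] (A : LieIdeal F L) : Prop :=
  A ≠ ⊥ ∧ ∀ B : LieIdeal F L, B < A → B = ⊥

/-- The Frattini series: `φ i (L) / N (i-1) (L) = φ(L ⧸ N (i-1) (L))` for `i ≥ 1`. -/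
noncomputable def fratSeries (L : Type*) [LieRing L] [LieAlgebra F L] (i : ℕ) :
    LieSubalgebra F L :=
  LieSubalgebra.comap (lieQuotMk (upperNil F L (i - 1)))
    (lieFrattini F (L ⧸ upperNil F L (i - 1)))

/-- `L` is extreme: `N i (L) / φ i (L)` is a chief factor of `L` for each `1 ≤ i ≤ n(L)`. -/
def IsExtremeLie (L : Type*) [LieRing L] [LieAlgebra F L] : Prop :=
  ∀ i, 1 ≤ i → i ≤ nilLen F L →
    (fratSeries F L i : Set L) ⊆ (upperNil F L i : Set L) ∧
    (fratSeries F L i : Set L) ≠ (upperNil F L i : Set L) ∧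
    ∀ C : LieIdeal F L, (fratSeries F L i : Set L) ⊆ (C : Set L) → C ≤ upperNil F L i →
      (C : Set L) = (fratSeries F L i : Set L) ∨ C = upperNil F L i

/-- `L` is supersolvable: it has a chain of ideals with one-dimensional quotients. -/
def IsSupersolvable (L : Type*) [LieRing L] [LieAlgebra F L] : Prop :=
  ∃ (n : ℕ) (C : ℕ → LieIdeal F L), C 0 = ⊥ ∧ C n = ⊤ ∧
    ∀ i < n, C i ≤ C (i + 1) ∧
      Module.finrank F (C (i + 1)) = Module.finrank F (C i) + 1

/-- A minimal ideal `A` is complemented if some maximal subalgebra `M` satisfies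
`L = A + M` and `A ∩ M = 0`. -/
def IsComplementedIdeal {L : Type*} [LieRing L] [LieAlgebra F L] (A : LieIdeal F L) : Prop :=
  ∃ M : LieSubalgebra F L, IsMaxSub F M ∧
    A.toSubmodule ⊔ M.toSubmodule = ⊤ ∧ A.toSubmodule ⊓ M.toSubmodule = ⊥

/-!
Measure the nilpotency of an ideal `I` of `L` by the ideals `I.lcs L k = ⁅I, ⁅I, …, ⁅I, L⁆⁆⁆` of
`L` rather than by the lower central series of the Lie algebra `I`: one of them vanishes iff `I`
is nilpotent. Since the nilradical of a Noetherian Lie algebra is nilpotent, an ideal `C` then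
lies in `N (i+1) (L)` iff `C.lcs L k ≤ N i (L)` for some `k`.

Induct on `i`. If an ideal `C` of `L` lies in `N (i+1) (M)`, the same criterion applied inside `M`
puts some term of the series of `C` computed in `M` into `N i (M)`; as `C ⊆ M`, the ideal
`C.lcs L (k+1)` of `L` lies in that term, hence in the core of `N i (M)`, hence in `N i (L)`
by induction, and therefore `C ≤ N (i+1) (L)`.
-/

namespace LieIdeal

variable {R L : Type*} [CommRing R] [LieRing L] [LieAlgebra R L]

section Module

variable {M : Type*} [AddCommGroup M] [Module R M] [LieRingModule L M]

lemma isNilpotent_iff_exists_lcs_eq_bot [LieModule R L M] (I : LieIdeal R L) :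
    LieModule.IsNilpotent I M ↔ ∃ k, I.lcs M k = ⊥ := by
  rw [LieModule.isNilpotent_iff R]
  refine exists_congr fun k => ?_
  rw [← LieSubmodule.toSubmodule_eq_bot, ← coe_lcs_eq, LieSubmodule.toSubmodule_eq_bot]

lemma lcs_mono {I J : LieIdeal R L} (h : I ≤ J) (k : ℕ) : I.lcs M k ≤ J.lcs M k := by
  induction k with
  | zero => rfl
  | succ k ih => simpa only [lcs_succ] using LieSubmodule.mono_lie h ih

lemma lie_le_lcs_succ_sup (I : LieIdeal R L) {N X : LieSubmodule R L M} {a : ℕ}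
    (h : X ≤ I.lcs M a ⊔ N) : ⁅I, X⁆ ≤ I.lcs M (a + 1) ⊔ N :=
  calc ⁅I, X⁆ ≤ ⁅I, I.lcs M a ⊔ N⁆ := LieSubmodule.mono_lie_right I h
    _ = ⁅I, I.lcs M a⁆ ⊔ ⁅I, N⁆ := LieSubmodule.lie_sup ..
    _ ≤ I.lcs M (a + 1) ⊔ N := by
      rw [lcs_succ]
      exact sup_le_sup_left (LieSubmodule.lie_le_right N I) _

lemma lcs_sup_le (I J : LieIdeal R L) (a b : ℕ) :
    (I ⊔ J).lcs M (a + b) ≤ I.lcs M a ⊔ J.lcs M b := by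
  suffices ∀ n a b, a + b = n → (I ⊔ J).lcs M n ≤ I.lcs M a ⊔ J.lcs M b from
    this _ a b rfl
  intro n
  induction n with
  | zero =>
    rintro a b hab
    obtain ⟨rfl, rfl⟩ : a = 0 ∧ b = 0 := by omega
    exact le_sup_of_le_left le_rfl
  | succ n ih =>
    rintro a b hab
    rw [lcs_succ, LieSubmodule.sup_lie]
    refine sup_le ?_ ?_
    · rcases a with _ | a
      · exact le_sup_of_le_left le_top
      · exact lie_le_lcs_succ_sup I (ih a b (by omega))
    · rcases b with _ | b
      · exact le_sup_of_le_right le_top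
      · rw [sup_comm (I.lcs M a)]
        exact lie_le_lcs_succ_sup J ((ih a b (by omega)).trans (sup_comm (I.lcs M a) _).le)

instance instIsNilpotentSup [LieModule R L M] (I J : LieIdeal R L) [LieModule.IsNilpotent I M]
    [LieModule.IsNilpotent J M] : LieModule.IsNilpotent ↥(I ⊔ J) M := by
  obtain ⟨a, ha⟩ := (isNilpotent_iff_exists_lcs_eq_bot I).mp ‹_›
  obtain ⟨b, hb⟩ := (isNilpotent_iff_exists_lcs_eq_bot J).mp ‹_›
  refine (isNilpotent_iff_exists_lcs_eq_bot _).mpr ⟨a + b, le_bot_iff.mp ?_⟩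
  simpa [ha, hb] using lcs_sup_le (M := M) I J a b

end Module

lemma lcs_succ_le_map_lcs_comap {K : Type*} [LieRing K] [LieAlgebra R K] (f : K →ₗ⁅R⁆ L)
    (I : LieIdeal R L) (hI : (I : Set L) ⊆ Set.range f) (k : ℕ) :
    (I.lcs L (k + 1)).toSubmodule ≤
      ((I.comap f).lcs K k).toSubmodule.map (f : K →ₗ[R] L) := by
  induction k with
  | zero =>
    intro x hx
    obtain ⟨y, rfl⟩ := hI (LieSubmodule.lie_le_left I _ hx)
    exact ⟨y, trivial, rfl⟩
  | succ k ih =>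
    rw [lcs_succ, LieSubmodule.lieIdeal_oper_eq_linear_span', Submodule.span_le]
    rintro _ ⟨x, hx, z, hz, rfl⟩
    obtain ⟨x, rfl⟩ := hI hx
    obtain ⟨z, hz', rfl⟩ := ih hz
    refine ⟨⁅x, z⁆, ?_, f.map_lie x z⟩
    rw [lcs_succ]
    exact LieSubmodule.lie_mem_lie (mem_comap.mpr hx) hz'

lemma isNilpotent_self_iff_isNilpotent_ambient (I : LieIdeal R L) :
    LieRing.IsNilpotent I ↔ LieModule.IsNilpotent I L := by
  refine ⟨fun h => ?_, fun _ => ?_⟩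
  · obtain ⟨k, hk⟩ := (LieModule.isNilpotent_iff R I I).mp h
    refine (isNilpotent_iff_exists_lcs_eq_bot I).mpr ⟨k + 1, ?_⟩
    have := lcs_succ_le_map_lcs_comap I.incl I (fun x hx => ⟨⟨x, hx⟩, rfl⟩) k
    rw [comap_incl_self, lcs_top, hk] at this
    simpa using this
  · exact Function.Injective.lieModuleIsNilpotent (f := LieHom.id)
      (g := (I.incl : I →ₗ[R] L)) (fun _ _ => rfl) I.incl_injective

lemma map_lcs_eq {L' : Type*} [LieRing L'] [LieAlgebra R L'] {f : L →ₗ⁅R⁆ L'}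
    (hf : Function.Surjective f) (I : LieIdeal R L) (k : ℕ) :
    map f (I.lcs L k) = (I.map f).lcs L' k := by
  induction k with
  | zero => rw [lcs_zero, lcs_zero, ← f.idealRange_eq_map, f.idealRange_eq_top_of_surjective hf]
  | succ k ih => rw [lcs_succ, lcs_succ, map_bracket_eq f hf, ih]

end LieIdeal

section UpperNilpotentSeries

variable {F} {L : Type*} [LieRing L] [LieAlgebra F L]

lemma lieQuotMk_surjective (I : LieIdeal F L) : Function.Surjective (lieQuotMk I) :=
  LieSubmodule.Quotient.surjective_mk' I

lemma ker_lieQuotMk (I : LieIdeal F L) : (lieQuotMk I).ker = I := by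
  ext x
  exact LieSubmodule.Quotient.mk_eq_zero'

lemma isNilpotent_nilrad [IsNoetherian F L] : LieRing.IsNilpotent (nilrad F L) := by
  refine CompleteLattice.WellFoundedGT.isSupClosedCompact (LieIdeal F L) inferInstance
    {I | LieModule.IsNilpotent I I} ⟨⊥, ?_⟩ fun I hI J hJ => ?_
  · exact (LieIdeal.isNilpotent_self_iff_isNilpotent_ambient ⊥).mpr inferInstance
  · have := (LieIdeal.isNilpotent_self_iff_isNilpotent_ambient I).mp hI
    have := (LieIdeal.isNilpotent_self_iff_isNilpotent_ambient J).mp hJ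
    exact (LieIdeal.isNilpotent_self_iff_isNilpotent_ambient (I ⊔ J)).mpr inferInstance

lemma le_upperNil_succ_of_lcs_le {C : LieIdeal F L} {i k : ℕ}
    (h : C.lcs L k ≤ upperNil F L i) : C ≤ upperNil F L (i + 1) := by
  have hq := lieQuotMk_surjective (upperNil F L i)
  have hnil : LieRing.IsNilpotent (C.map (lieQuotMk (upperNil F L i))) := by
    refine (LieIdeal.isNilpotent_self_iff_isNilpotent_ambient _).mpr
      ((LieIdeal.isNilpotent_iff_exists_lcs_eq_bot _).mpr ⟨k, ?_⟩)
    rwa [← LieIdeal.map_lcs_eq hq, LieIdeal.map_eq_bot_iff, ker_lieQuotMk]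
  exact LieIdeal.map_le_iff_le_comap.mp (le_sSup hnil)

lemma exists_lcs_le_of_le_upperNil_succ [IsNoetherian F L] {C : LieIdeal F L} {i : ℕ}
    (h : C ≤ upperNil F L (i + 1)) : ∃ k, C.lcs L k ≤ upperNil F L i := by
  have hq := lieQuotMk_surjective (upperNil F L i)
  obtain ⟨k, hk⟩ := (LieIdeal.isNilpotent_iff_exists_lcs_eq_bot _).mp
    ((LieIdeal.isNilpotent_self_iff_isNilpotent_ambient _).mp
      (isNilpotent_nilrad (F := F) (L := L ⧸ upperNil F L i)))
  refine ⟨k, ?_⟩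
  rw [← ker_lieQuotMk (upperNil F L i), ← LieIdeal.map_eq_bot_iff, LieIdeal.map_lcs_eq hq,
    eq_bot_iff, ← hk]
  exact LieIdeal.lcs_mono (LieIdeal.map_le_iff_le_comap.mpr h) k

lemma lieCore_map_upperNil_succ_le [IsNoetherian F L] (M : LieSubalgebra F L) {i : ℕ}
    (ih : lieCore F (LieSubalgebra.map M.incl (LieIdeal.toLieSubalgebra F M (upperNil F M i)))
      ≤ upperNil F L i) :
    lieCore F (LieSubalgebra.map M.incl (LieIdeal.toLieSubalgebra F M (upperNil F M (i + 1))))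
      ≤ upperNil F L (i + 1) := by
  refine sSup_le fun C (hC : (C : Set L) ⊆ _) => ?_
  have hCM : (C : Set L) ⊆ Set.range M.incl := fun x hx => by
    obtain ⟨y, -, rfl⟩ := hC hx
    exact ⟨y, rfl⟩
  have hCM' : C.comap M.incl ≤ upperNil F M (i + 1) := fun y hy => by
    obtain ⟨z, hz, hzy⟩ := hC hy
    rwa [← Subtype.ext hzy]
  obtain ⟨k, hk⟩ := exists_lcs_le_of_le_upperNil_succ hCM'
  refine le_upperNil_succ_of_lcs_le (k := k + 1) (le_trans (le_sSup fun x hx => ?_) ih)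
  obtain ⟨y, hy, rfl⟩ := LieIdeal.lcs_succ_le_map_lcs_comap M.incl C hCM k hx
  exact ⟨y, hk hy, rfl⟩

end UpperNilpotentSeries

theorem stmt5_general {F L : Type*} [Field F] [LieRing L] [LieAlgebra F L]
    [FiniteDimensional F L]
    (M : LieSubalgebra F L) :
    ∀ i : ℕ,
      lieCore F (LieSubalgebra.map M.incl (LieIdeal.toLieSubalgebra F M (upperNil F M i)))
        ≤ upperNil F L i := by
  intro i
  induction i with
  | zero =>
    refine sSup_le fun C hC x hx => ?_
    obtain ⟨y, hy, rfl⟩ := hC hx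
    simpa [upperNil] using hy
  | succ i ih => exact lieCore_map_upperNil_succ_le M ih

/-- If `M` is a maximal subalgebra of `L` then the core of `N i (M)` in `L` is contained
in `N i (L)` for every `i`. -/
theorem stmt5 {F L : Type*} [Field F] [LieRing L] [LieAlgebra F L]
    [FiniteDimensional F L] [LieAlgebra.IsSolvable L]
    (M : LieSubalgebra F L) (hM : IsMaxSub F M) :
    ∀ i : ℕ,
      lieCore F (LieSubalgebra.map M.incl (LieIdeal.toLieSubalgebra F M (upperNil F M i)))
        ≤ upperNil F L i :=
  stmt5_general M
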